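/- Let S be epsilon-strongly graded by a finite group G with R = S_e. Then S/R is a Frobenius extension: there is a finite set J, elements x_j, y_j ∈ S for j ∈ J, and an R-bimodule map E : S → R such that s = Σ_j x_j E(y_j s) = Σ_j E(s x_j) y_j for every s ∈ S. Concretely, one may take E(s) = s_e (the degree-e component) and the x_j, y_j given by decompositions ε_g = Σ_i u_g^{(i)} v_{g⁻¹}^{(i)}. -/

import Mathlib

open Pointwise

variable {S : Type*} [Ring S] {ι : Type*} [AddGroup ι]

/-- `I` is a unital ideal of the principal component `𝒜 0`. -/
def IsUnitalIdealOfZero (𝒜 : ι → AddSubgroup S) (I : AddSubgroup S) : Prop :=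
  I ≤ 𝒜 0 ∧ (∀ r ∈ 𝒜 0, ∀ x ∈ I, r * x ∈ I ∧ x * r ∈ I) ∧
    ∃ e ∈ I, ∀ x ∈ I, e * x = x ∧ x * e = x

/-- `S` is epsilon-strongly graded by the (additively written) group `ι`:
for each `g`, `𝒜 g * 𝒜 (-g)` is a unital ideal of `𝒜 0` and
`𝒜 g * 𝒜 h = (𝒜 g * 𝒜 (-g)) * 𝒜 (g+h) = 𝒜 (g+h) * (𝒜 (-h) * 𝒜 h)`. -/
def IsEpsilonStronglyGraded (𝒜 : ι → AddSubgroup S) : Prop :=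
  (∀ g : ι, IsUnitalIdealOfZero 𝒜 (𝒜 g * 𝒜 (-g))) ∧
    ∀ g h : ι, 𝒜 g * 𝒜 h = (𝒜 g * 𝒜 (-g)) * 𝒜 (g + h) ∧
      𝒜 g * 𝒜 h = 𝒜 (g + h) * (𝒜 (-h) * 𝒜 h)
/-- The projection of `S` onto its principal component `R = S_e`. -/
def projE [DecidableEq ι] (𝒜 : ι → AddSubgroup S) [GradedRing 𝒜] (s : S) : S :=
  ((DirectSum.decompose 𝒜 s) 0 : S)

/-!
Take `E(s) = s_e`. A degree-`g⁻¹` element `v` can only carry the `g`-component of `s` into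
degree `e`, so `E(v s) = v s_g`; hence `Σᵢ u_g^{(i)} E(v_{g⁻¹}^{(i)} s) = ε_g s_g = s_g`, and
summing over `g` recovers `s`. The right-hand identity is the mirror image, using
`s_{g⁻¹} ε_g = s_{g⁻¹}`.
-/

open DirectSum

theorem DirectSum.sum_coe_decompose {κ M σ : Type*} [DecidableEq κ] [Fintype κ]
    [AddCommMonoid M] [SetLike σ M] [AddSubmonoidClass σ M] (ℳ : κ → σ) [Decomposition ℳ]
    (m : M) : ∑ i, (decompose ℳ m i : M) = m := by
  classical
  rw [← Finset.sum_subset (Finset.subset_univ (decompose ℳ m).support), sum_support_decompose]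
  intro i _ hi
  rw [DFinsupp.notMem_support_iff.mp hi, ZeroMemClass.coe_zero]

section Projection

variable [DecidableEq ι] (𝒜 : ι → AddSubgroup S) [GradedRing 𝒜]

theorem projE_mem (s : S) : projE 𝒜 s ∈ 𝒜 0 :=
  SetLike.coe_mem _

theorem projE_add (s t : S) : projE 𝒜 (s + t) = projE 𝒜 s + projE 𝒜 t :=
  map_add (GradedRing.proj 𝒜 0) s t

theorem projE_mul_of_left_mem_zero {r : S} (hr : r ∈ 𝒜 0) (s : S) :
    projE 𝒜 (r * s) = r * projE 𝒜 s :=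
  coe_decompose_mul_of_left_mem_zero 𝒜 hr

theorem projE_mul_of_right_mem_zero {r : S} (hr : r ∈ 𝒜 0) (s : S) :
    projE 𝒜 (s * r) = projE 𝒜 s * r :=
  coe_decompose_mul_of_right_mem_zero 𝒜 hr

theorem projE_mul_of_left_mem_neg {g : ι} {x : S} (hx : x ∈ 𝒜 (-g)) (s : S) :
    projE 𝒜 (x * s) = x * decompose 𝒜 s g := by
  rw [projE, ← neg_add_cancel g]
  exact coe_decompose_mul_add_of_left_mem 𝒜 hx

theorem projE_mul_of_right_mem {g : ι} {x : S} (hx : x ∈ 𝒜 g) (s : S) :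
    projE 𝒜 (s * x) = decompose 𝒜 s (-g) * x := by
  rw [projE, ← neg_add_cancel g]
  exact coe_decompose_mul_add_of_right_mem 𝒜 hx

variable [Fintype ι] {ε : ι → S} {κ : ι → Type*} [∀ g, Fintype (κ g)]
  {u v : ∀ g, κ g → S}

theorem sum_mul_projE_mul_eq_self (hε : ∀ g, ∀ s ∈ 𝒜 g, ε g * s = s)
    (hv : ∀ g i, v g i ∈ 𝒜 (-g)) (huv : ∀ g, ∑ i, u g i * v g i = ε g) (s : S) :
    ∑ g, ∑ i, u g i * projE 𝒜 (v g i * s) = s := calc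
  _ = ∑ g, ε g * (decompose 𝒜 s g : S) := by
    simp_rw [projE_mul_of_left_mem_neg 𝒜 (hv _ _), ← mul_assoc, ← Finset.sum_mul, huv]
  _ = ∑ g, (decompose 𝒜 s g : S) :=
    Finset.sum_congr rfl fun g _ => hε g _ (SetLike.coe_mem _)
  _ = s := sum_coe_decompose 𝒜 s

theorem sum_projE_mul_mul_eq_self (hε : ∀ g, ∀ s ∈ 𝒜 g, s * ε (-g) = s)
    (hu : ∀ g i, u g i ∈ 𝒜 g) (huv : ∀ g, ∑ i, u g i * v g i = ε g) (s : S) :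
    ∑ g, ∑ i, projE 𝒜 (s * u g i) * v g i = s := calc
  _ = ∑ g, (decompose 𝒜 s (-g) : S) * ε g := by
    simp_rw [projE_mul_of_right_mem 𝒜 (hu _ _), mul_assoc, ← Finset.mul_sum, huv]
  _ = ∑ g, (decompose 𝒜 s (-g) : S) :=
    Finset.sum_congr rfl fun g _ => by simpa using hε (-g) _ (SetLike.coe_mem _)
  _ = s := (Equiv.sum_comp (Equiv.neg ι) fun g => (decompose 𝒜 s g : S)).trans
    (sum_coe_decompose 𝒜 s)

end Projection

theorem frobenius_extension_general [DecidableEq ι] [Fintype ι]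
    (𝒜 : ι → AddSubgroup S) [GradedRing 𝒜]
    (ε : ι → S)
    (hid : ∀ g : ι, ∀ s ∈ 𝒜 g, ε g * s = s ∧ s * ε (-g) = s)
    (n : ι → ℕ) (u : ∀ g : ι, Fin (n g) → S) (v : ∀ g : ι, Fin (n g) → S)
    (hu : ∀ g i, u g i ∈ 𝒜 g) (hv : ∀ g i, v g i ∈ 𝒜 (-g))
    (huv : ∀ g : ι, ∑ i, u g i * v g i = ε g) :
    -- `E` is an `R`-bimodule map into `R`
    (∀ s : S, projE 𝒜 s ∈ 𝒜 0) ∧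
    (∀ s t : S, projE 𝒜 (s + t) = projE 𝒜 s + projE 𝒜 t) ∧
    (∀ r ∈ 𝒜 0, ∀ s : S, projE 𝒜 (r * s) = r * projE 𝒜 s ∧ projE 𝒜 (s * r) = projE 𝒜 s * r) ∧
    -- the Frobenius identities
    (∀ s : S, s = ∑ g : ι, ∑ i, u g i * projE 𝒜 (v g i * s)) ∧
    (∀ s : S, s = ∑ g : ι, ∑ i, projE 𝒜 (s * u g i) * v g i) :=
  ⟨projE_mem 𝒜, projE_add 𝒜,
    fun _ hr s => ⟨projE_mul_of_left_mem_zero 𝒜 hr s, projE_mul_of_right_mem_zero 𝒜 hr s⟩,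
    fun s => (sum_mul_projE_mul_eq_self 𝒜 (fun g s hs => (hid g s hs).1) hv huv s).symm,
    fun s => (sum_projE_mul_mul_eq_self 𝒜 (fun g s hs => (hid g s hs).2) hu huv s).symm⟩

/-- If `S` is epsilon-strongly graded by a finite group, then `S/R` is a Frobenius
extension, with Frobenius system given by the projection `E(s) = s_e` and the elements of
decompositions `ε_g = Σᵢ u_g^{(i)} v_{g⁻¹}^{(i)}`. -/
theorem frobenius_extension [DecidableEq ι] [Fintype ι]
    (𝒜 : ι → AddSubgroup S) [GradedRing 𝒜]
    (h : IsEpsilonStronglyGraded 𝒜) (ε : ι → S)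
    (hmem : ∀ g : ι, ε g ∈ 𝒜 g * 𝒜 (-g))
    (hid : ∀ g : ι, ∀ s ∈ 𝒜 g, ε g * s = s ∧ s * ε (-g) = s)
    (n : ι → ℕ) (u : ∀ g : ι, Fin (n g) → S) (v : ∀ g : ι, Fin (n g) → S)
    (hu : ∀ g i, u g i ∈ 𝒜 g) (hv : ∀ g i, v g i ∈ 𝒜 (-g))
    (huv : ∀ g : ι, ∑ i, u g i * v g i = ε g) :
    -- `E` is an `R`-bimodule map into `R`
    (∀ s : S, projE 𝒜 s ∈ 𝒜 0) ∧
    (∀ s t : S, projE 𝒜 (s + t) = projE 𝒜 s + projE 𝒜 t) ∧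
    (∀ r ∈ 𝒜 0, ∀ s : S, projE 𝒜 (r * s) = r * projE 𝒜 s ∧ projE 𝒜 (s * r) = projE 𝒜 s * r) ∧
    -- the Frobenius identities
    (∀ s : S, s = ∑ g : ι, ∑ i, u g i * projE 𝒜 (v g i * s)) ∧
    (∀ s : S, s = ∑ g : ι, ∑ i, projE 𝒜 (s * u g i) * v g i) :=
  frobenius_extension_general 𝒜 ε hid n u v hu hv huv
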